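/- Second modularity theorem: for each k ∈ {0,1,2,3}, if M ≥ 1, N ≥ 1 and p, q are natural numbers with 2^(M−1) ≤ p < 2^M, 2^(M−1) ≤ q < 2^M, and 2^(N−1) ≤ p ⊕ q < 2^N (where ⊕ is bitwise XOR), then N < M and ω_k(p, q) = ω_k(2^N + (p mod 2^N), 2^N + (q mod 2^N)). -/

import Mathlib

/-- The five states of the Cayley–Dickson twist tree:
corner (C), top (T), left (L), diagonal (D) and interior (I). -/
inductive TwistState : Type
  | C | T | L | D | I
deriving DecidableEq

open TwistState

/-- The interior-node sign `i_k(a,b)` for the doubling product `P_k`, `k ∈ {0,1,2,3}`. -/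
def iTwist (k : ℕ) (a b : Bool) : ℤ :=
  match k with
  | 0 => if a = false ∧ b = false then -1 else 1
  | 1 => -1
  | 2 => 1
  | _ => if a = false ∧ b = false then 1 else -1

/-- One step of the twist-tree finite-state computation: from the current
(state, sign) pair, read a doublet of bits `(a, b)` and move to the new
(state, sign) pair. -/
def twistStep (k : ℕ) : TwistState × ℤ → Bool × Bool → TwistState × ℤ
  | (C, s), (false, false) => (C, s)
  | (C, s), (false, true)  => (T, s)
  | (C, s), (true, false)  => (L, s)
  | (C, s), (true, true)   => (D, -s)
  | (T, s), (false, false) => (T, s)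
  | (T, s), (false, true)  => (T, s)
  | (T, s), (true, false)  => (I, s)
  | (T, s), (true, true)   => (I, -s)
  | (L, s), (false, false) => (L, s)
  | (L, s), (false, true)  => (I, -s)
  | (L, s), (true, false)  => (L, s)
  | (L, s), (true, true)   => (I, s)
  | (D, s), (false, false) => (D, s)
  | (D, s), (false, true)  => (I, -s)
  | (D, s), (true, false)  => (I, s)
  | (D, s), (true, true)   => (D, s)
  | (I, s), (a, b)         => (I, s * iTwist k a b)

/-- The Cayley–Dickson twist `ω_k(p,q)` for the doubling product `P_k`:
write `p` and `q` in binary with a common number of bits (padding with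
leading zeros), read the doublets of bits from most significant to least
significant, running the twist-tree automaton starting at state `C` with
sign `+1`; the result is the final sign. -/
def omegaTwist (k : ℕ) (p q : ℕ) : ℤ :=
  (((List.range (max (Nat.size p) (Nat.size q))).reverse.map
      (fun i => (p.testBit i, q.testBit i))).foldl (twistStep k) (C, 1)).2

/-!
Both pairs `(p, q)` and `(2^N + p mod 2^N, 2^N + q mod 2^N)` have equal leading bits and agree on
every bit from position `N` upwards. The automaton reads the leading doublet `(1, 1)` and moves
from `C` to `D` with sign `-1`, and `D` is left unchanged by every equal doublet `(a, a)`; so for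
both pairs the run reaches `(D, -1)` exactly when the `N` low doublets begin, and these low
doublets are the same for the two pairs.
-/

def bitDoublets (p q n : ℕ) : List (Bool × Bool) :=
  (List.range n).reverse.map fun i => (p.testBit i, q.testBit i)

theorem bitDoublets_succ (p q n : ℕ) :
    bitDoublets p q (n + 1) = (p.testBit n, q.testBit n) :: bitDoublets p q n := by
  simp [bitDoublets, List.range_succ]

theorem bitDoublets_congr {p q p' q' n : ℕ} (hp : ∀ i < n, p'.testBit i = p.testBit i)
    (hq : ∀ i < n, q'.testBit i = q.testBit i) : bitDoublets p' q' n = bitDoublets p q n :=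
  List.map_congr_left fun i hi => by
    rw [List.mem_reverse, List.mem_range] at hi
    rw [hp i hi, hq i hi]

theorem twistStep_D_self (k : ℕ) (s : ℤ) (a : Bool) : twistStep k (D, s) (a, a) = (D, s) := by
  cases a <;> rfl

theorem foldl_bitDoublets_D {k N n p q : ℕ} (s : ℤ) (hNn : N ≤ n)
    (hagree : ∀ i, N ≤ i → p.testBit i = q.testBit i) :
    (bitDoublets p q n).foldl (twistStep k) (D, s) =
      (bitDoublets p q N).foldl (twistStep k) (D, s) := by
  induction n, hNn using Nat.le_induction with
  | base => rfl
  | succ n hNn ih => rw [bitDoublets_succ, List.foldl_cons, hagree n hNn, twistStep_D_self, ih]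

theorem testBit_eq_decide_of_two_pow_le_of_lt {x m i : ℕ} (h1 : 2 ^ m ≤ x)
    (h2 : x < 2 ^ (m + 1)) (hi : m ≤ i) : x.testBit i = decide (i = m) := by
  rcases hi.eq_or_lt with rfl | hi
  · have hdiv : x / 2 ^ m = 1 :=
      Nat.div_eq_of_lt_le (by simpa using h1) (by rwa [one_add_one_eq_two, ← pow_succ'])
    simp [Nat.testBit_eq_decide_div_mod_eq, hdiv]
  · rw [Nat.testBit_lt_two_pow (h2.trans_le (Nat.pow_le_pow_right two_pos hi))]
    simp [hi.ne']

theorem size_eq_of_two_pow_le_of_lt {x m : ℕ} (h1 : 2 ^ m ≤ x) (h2 : x < 2 ^ (m + 1)) :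
    x.size = m + 1 :=
  le_antisymm (Nat.size_le.2 h2) (Nat.lt_size.2 h1)

theorem testBit_eq_of_xor_lt_two_pow {p q N i : ℕ} (h : p ^^^ q < 2 ^ N) (hi : N ≤ i) :
    p.testBit i = q.testBit i := by
  have hxor := Nat.testBit_lt_two_pow (h.trans_le (Nat.pow_le_pow_right two_pos hi))
  rw [Nat.testBit_xor] at hxor
  simpa using hxor

theorem xor_lt_two_pow_of_two_pow_le {p q m : ℕ} (hp1 : 2 ^ m ≤ p) (hp2 : p < 2 ^ (m + 1))
    (hq1 : 2 ^ m ≤ q) (hq2 : q < 2 ^ (m + 1)) : p ^^^ q < 2 ^ m :=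
  Nat.lt_pow_two_of_testBit _ fun i hi => by
    rw [Nat.testBit_xor, testBit_eq_decide_of_two_pow_le_of_lt hp1 hp2 hi,
      testBit_eq_decide_of_two_pow_le_of_lt hq1 hq2 hi, Bool.xor_self]

theorem testBit_two_pow_add_mod_two_pow {x N i : ℕ} (hi : i < N) :
    (2 ^ N + x % 2 ^ N).testBit i = x.testBit i := by
  rw [Nat.testBit_two_pow_add_gt hi, Nat.testBit_mod_two_pow]
  simp [hi]

theorem two_pow_add_mod_two_pow_lt (x N : ℕ) : 2 ^ N + x % 2 ^ N < 2 ^ (N + 1) := by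
  have := Nat.mod_lt x (Nat.two_pow_pos N)
  rw [pow_succ]
  omega

theorem omegaTwist_eq_foldl_bitDoublets {k N p q : ℕ} (hN : N < p.size) (hsize : q.size = p.size)
    (hagree : ∀ i, N ≤ i → p.testBit i = q.testBit i) :
    omegaTwist k p q = ((bitDoublets p q N).foldl (twistStep k) (D, -1)).2 := by
  obtain ⟨m, hm⟩ : ∃ m, p.size = m + 1 := ⟨p.size - 1, by omega⟩
  have htop : p.testBit m = true := by
    have h1 : 2 ^ m ≤ p := Nat.lt_size.1 (hm ▸ m.lt_succ_self)
    rw [testBit_eq_decide_of_two_pow_le_of_lt h1 (hm ▸ p.lt_size_self) le_rfl, decide_eq_true_eq]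
  have hfold : omegaTwist k p q = ((bitDoublets p q (m + 1)).foldl (twistStep k) (C, 1)).2 := by
    rw [omegaTwist, hsize, max_self, hm]
    rfl
  rw [hfold, bitDoublets_succ, List.foldl_cons, ← hagree m (by omega), htop]
  exact congrArg Prod.snd (foldl_bitDoublets_D (-1) (by omega) hagree)

/-- Second modularity theorem: for each `k ∈ {0,1,2,3}`, if `M ≥ 1`, `N ≥ 1`,
`2^(M-1) ≤ p < 2^M`, `2^(M-1) ≤ q < 2^M`, and `2^(N-1) ≤ p ⊕ q < 2^N` (with
`⊕` the bitwise XOR), then `N < M` and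
`ω_k(p, q) = ω_k(2^N + (p mod 2^N), 2^N + (q mod 2^N))`. -/
theorem omegaTwist_second_modularity :
    ∀ k ∈ ({0, 1, 2, 3} : Finset ℕ), ∀ M N p q : ℕ, 1 ≤ M → 1 ≤ N →
      2 ^ (M - 1) ≤ p → p < 2 ^ M → 2 ^ (M - 1) ≤ q → q < 2 ^ M →
      2 ^ (N - 1) ≤ p ^^^ q → p ^^^ q < 2 ^ N →
      N < M ∧
        omegaTwist k p q =
          omegaTwist k (2 ^ N + p % 2 ^ N) (2 ^ N + q % 2 ^ N) := by
  intro k _ M N p q hM hN hpl hpu hql hqu hxl hxu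
  obtain ⟨m, rfl⟩ : ∃ m, M = m + 1 := ⟨M - 1, by omega⟩
  obtain ⟨n, rfl⟩ : ∃ n, N = n + 1 := ⟨N - 1, by omega⟩
  simp only [Nat.add_sub_cancel] at hpl hql hxl
  have hnm : n < m := (Nat.pow_lt_pow_iff_right one_lt_two).1
    (hxl.trans_lt (xor_lt_two_pow_of_two_pow_le hpl hpu hql hqu))
  have hlow (x : ℕ) : 2 ^ (n + 1) ≤ 2 ^ (n + 1) + x % 2 ^ (n + 1) := Nat.le_add_right _ _
  have hhigh (x i : ℕ) (hi : n + 1 ≤ i) :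
      (2 ^ (n + 1) + x % 2 ^ (n + 1)).testBit i = decide (i = n + 1) :=
    testBit_eq_decide_of_two_pow_le_of_lt (hlow x) (two_pow_add_mod_two_pow_lt x _) hi
  have hsp := size_eq_of_two_pow_le_of_lt hpl hpu
  have hsq := size_eq_of_two_pow_le_of_lt hql hqu
  have hsp' := size_eq_of_two_pow_le_of_lt (hlow p) (two_pow_add_mod_two_pow_lt p _)
  have hsq' := size_eq_of_two_pow_le_of_lt (hlow q) (two_pow_add_mod_two_pow_lt q _)
  refine ⟨by omega, ?_⟩
  rw [omegaTwist_eq_foldl_bitDoublets (N := n + 1) (by omega) (by rw [hsp, hsq])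
      fun i hi => testBit_eq_of_xor_lt_two_pow hxu hi,
    omegaTwist_eq_foldl_bitDoublets (N := n + 1) (by omega) (by rw [hsp', hsq'])
      fun i hi => by rw [hhigh p i hi, hhigh q i hi],
    bitDoublets_congr (fun _ => testBit_two_pow_add_mod_two_pow)
      (fun _ => testBit_two_pow_add_mod_two_pow)]
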